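/- In the formal power series ring ℚ[[X,Y]], the series L(X,Y) = Σ_{k≥1} L_k(X) Y^{k−1} admits the closed form L(X,Y) = ((1−X)/2) · (1 + X·exp((1−X)Y)) / (1 − X·exp((1−X)Y)). -/

import Mathlib

/-- The number of ascents of a permutation `σ` of `Fin m`, i.e. the number of
indices `i` with `i+1 < m` and `σ i < σ (i+1)`. -/
def ascents {m : ℕ} (σ : Equiv.Perm (Fin m)) : ℕ :=
  (Finset.univ.filter fun i : Fin m =>
    ∃ h : (i : ℕ) + 1 < m, σ i < σ ⟨(i : ℕ) + 1, h⟩).card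

/-- `lam k ν` is the proportion of permutations of `{1, …, k-1}` with exactly `ν - 1`
ascents: `λ_{k,ν} = (1/(k-1)!) · #{σ ∈ S_{k-1} : #ascents(σ) = ν-1}`. -/
noncomputable def lam (k ν : ℕ) : ℚ :=
  ((Finset.univ.filter fun σ : Equiv.Perm (Fin (k - 1)) => ascents σ = ν - 1).card : ℚ) /
    ((k - 1).factorial : ℚ)


/-- The polynomials `L_k(X)`: `L_1(X) = (X+1)/2` and
`L_k(X) = Σ_{ν=1}^{k-1} λ_{k,ν} X^ν` for `k ≥ 2`. -/
noncomputable def Lpoly : ℕ → Polynomial ℚ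
  | 1 => Polynomial.C (1 / 2) * (Polynomial.X + 1)
  | k => ∑ ν ∈ Finset.Icc 1 (k - 1), Polynomial.C (lam k ν) * Polynomial.X ^ ν


/-- We view `ℚ[[X,Y]]` as `(ℚ[[X]])[[Y]]`: the inner variable is `X`, the outer one is `Y`. -/
noncomputable def Xv : PowerSeries (PowerSeries ℚ) := PowerSeries.C (R := PowerSeries ℚ) PowerSeries.X

/-- The generating series `L(X,Y) = Σ_{k≥1} L_k(X) Y^{k−1} ∈ ℚ[[X,Y]]`. -/
noncomputable def Lser2 : PowerSeries (PowerSeries ℚ) :=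
  PowerSeries.mk fun m => ((Lpoly (m + 1) : Polynomial ℚ) : PowerSeries ℚ)

/-- The formal exponential `exp((1−X)Y) = Σ_{b≥0} (1−X)^b Y^b / b! ∈ ℚ[[X,Y]]`. -/
noncomputable def expOneSubXY : PowerSeries (PowerSeries ℚ) :=
  PowerSeries.mk fun b =>
    (1 - PowerSeries.X : PowerSeries ℚ) ^ b * PowerSeries.C (R := ℚ) (1 / (b.factorial : ℚ))


/-!
With the Eulerian polynomials `A_n(X) = ∑_{σ ∈ S_n} X^{asc σ}` one has `L_{n+1} = X A_n / n!` for
`n ≥ 1`, so `L = (1 - X)/2 + X ∑_n A_n Y^n/n!`. Inserting the maximum into a permutation of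
`S_n` at each of the `n + 1` positions gives `A_{n+1} = (1 + nX) A_n + X(1 - X) A_n'`, whence
Carlitz's identity `A_n / (1 - X)^{n+1} = ∑_j (j+1)^n X^j`. Summing against `Y^n/n!`, the right
side becomes `∑_j X^j e^{(j+1)Y} = e^Y / (1 - X e^Y)`; substituting `Y ↦ (1 - X) Y` gives
`∑_n A_n Y^n/n! = (1 - X) e^{(1-X)Y} / (1 - X e^{(1-X)Y})`, which is the closed form.
-/

open Finset

section InsertMax

variable {n : ℕ}

abbrev IsAscentAt {m : ℕ} (σ : Equiv.Perm (Fin m)) (i : Fin m) : Prop :=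
  ∃ h : (i : ℕ) + 1 < m, σ i < σ ⟨(i : ℕ) + 1, h⟩

lemma ascents_eq_card_filter {m : ℕ} (σ : Equiv.Perm (Fin m)) :
    ascents σ = (univ.filter (IsAscentAt σ)).card := rfl

lemma isAscentAt_iff {m : ℕ} (σ : Equiv.Perm (Fin m)) (i : Fin m) :
    IsAscentAt σ i ↔ ∃ i' : Fin m, (i' : ℕ) = i + 1 ∧ σ i < σ i' := by
  constructor
  · rintro ⟨h, hlt⟩
    exact ⟨_, rfl, hlt⟩
  · rintro ⟨i', hi', hlt⟩
    have : i' = ⟨(i : ℕ) + 1, hi' ▸ i'.isLt⟩ := Fin.ext hi'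
    exact ⟨hi' ▸ i'.isLt, this ▸ hlt⟩

lemma ascents_le {m : ℕ} (σ : Equiv.Perm (Fin m)) : ascents σ ≤ m - 1 := by
  refine (card_le_card_of_injOn Fin.val (t := range (m - 1)) ?_ Fin.val_injective.injOn).trans
    (card_range _).le
  rintro i hi
  obtain ⟨h, -⟩ := (mem_filter.mp hi).2
  simp only [coe_range, Set.mem_Iio]
  omega

def insertMax (σ : Equiv.Perm (Fin n)) (p : Fin (n + 1)) : Equiv.Perm (Fin (n + 1)) :=
  (finSuccEquiv' p).trans ((Equiv.optionCongr σ).trans (finSuccEquiv' (Fin.last n)).symm)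

@[simp] lemma insertMax_apply_self (σ : Equiv.Perm (Fin n)) (p : Fin (n + 1)) :
    insertMax σ p p = Fin.last n := by
  simp [insertMax]

@[simp] lemma insertMax_apply_succAbove (σ : Equiv.Perm (Fin n)) (p : Fin (n + 1)) (j : Fin n) :
    insertMax σ p (p.succAbove j) = (σ j).castSucc := by
  simp [insertMax, Fin.succAbove_last]

lemma val_succAbove (p : Fin (n + 1)) (j : Fin n) :
    (p.succAbove j : ℕ) = if (j : ℕ) < p then (j : ℕ) else (j : ℕ) + 1 := by
  unfold Fin.succAbove
  split_ifs <;> simp_all [Fin.lt_def]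

lemma isAscentAt_insertMax_succAbove (σ : Equiv.Perm (Fin n)) (p : Fin (n + 1)) (j : Fin n) :
    IsAscentAt (insertMax σ p) (p.succAbove j) ↔ (j : ℕ) + 1 = p ∨ IsAscentAt σ j := by
  have hp : (p : ℕ) = p.succAbove j + 1 ↔ (j : ℕ) + 1 = p := by
    rw [val_succAbove]; split_ifs <;> omega
  have hsucc : ∀ j' : Fin n, (p.succAbove j' : ℕ) = p.succAbove j + 1 ↔
      (j' : ℕ) = j + 1 ∧ (j : ℕ) + 1 ≠ p := by
    intro j'; rw [val_succAbove, val_succAbove]; split_ifs <;> omega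
  simp only [isAscentAt_iff, Fin.exists_iff_succAbove p, insertMax_apply_self,
    insertMax_apply_succAbove, Fin.castSucc_lt_last, and_true, Fin.castSucc_lt_castSucc_iff, hp,
    hsucc]
  grind

lemma not_isAscentAt_insertMax_self (σ : Equiv.Perm (Fin n)) (p : Fin (n + 1)) :
    ¬ IsAscentAt (insertMax σ p) p := by
  rintro ⟨_, hlt⟩
  rw [insertMax_apply_self] at hlt
  exact hlt.not_ge (Fin.le_last _)

lemma ascents_insertMax (σ : Equiv.Perm (Fin n)) (p : Fin (n + 1)) :
    ascents (insertMax σ p)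
      = (univ.filter fun j : Fin n => (j : ℕ) + 1 = p ∨ IsAscentAt σ j).card := by
  rw [ascents_eq_card_filter, card_filter, card_filter, Fin.sum_univ_succAbove _ p,
    if_neg (not_isAscentAt_insertMax_self σ p), zero_add]
  simp only [isAscentAt_insertMax_succAbove]

lemma ascents_insertMax_zero (σ : Equiv.Perm (Fin n)) :
    ascents (insertMax σ 0) = ascents σ := by
  rw [ascents_insertMax, ascents_eq_card_filter]
  simp

lemma ascents_insertMax_succ (σ : Equiv.Perm (Fin n)) (q : Fin n) :
    ascents (insertMax σ q.succ) = ascents σ + if IsAscentAt σ q then 0 else 1 := by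
  have hfilter : (univ.filter fun j : Fin n => (j : ℕ) + 1 = q.succ ∨ IsAscentAt σ j)
      = insert q (univ.filter (IsAscentAt σ)) := by
    ext j; simp [Fin.ext_iff]
  rw [ascents_insertMax, hfilter, card_insert_eq_ite, ascents_eq_card_filter]
  simp only [mem_filter, mem_univ, true_and]
  split_ifs <;> rfl

lemma insertMax_bijective :
    Function.Bijective fun x : Fin (n + 1) × Equiv.Perm (Fin n) => insertMax x.2 x.1 := by
  refine (Fintype.bijective_iff_injective_and_card _).mpr
    ⟨?_, by simp [Fintype.card_perm, Nat.factorial_succ]⟩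
  rintro ⟨p, σ⟩ ⟨p', σ'⟩ h
  dsimp only at h
  obtain rfl : p = p' := (insertMax σ' p').injective <| by
    rw [insertMax_apply_self, ← h, insertMax_apply_self]
  congr 1
  exact Equiv.ext fun j => by simpa using congrArg (· (p.succAbove j)) h

lemma sum_perm_succ_eq_sum_insertMax {M : Type*} [AddCommMonoid M]
    (f : Equiv.Perm (Fin (n + 1)) → M) :
    ∑ τ, f τ = ∑ p, ∑ σ, f (insertMax σ p) := by
  rw [← Fintype.sum_prod_type']
  exact (Fintype.sum_bijective _ insertMax_bijective _ _ fun _ => rfl).symm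

end InsertMax

section Eulerian

open Polynomial

variable (R : Type*) [CommRing R]

noncomputable def eulerianPoly (n : ℕ) : R[X] :=
  ∑ σ : Equiv.Perm (Fin n), X ^ ascents σ

variable {R}

lemma X_mul_derivative_X_pow (a : ℕ) : (X : R[X]) * derivative (X ^ a) = C (a : R) * X ^ a := by
  cases a with
  | zero => simp
  | succ a => rw [derivative_X_pow, Nat.add_sub_cancel, pow_succ]; ring

lemma sum_X_pow_ascents_insertMax {n : ℕ} (σ : Equiv.Perm (Fin n)) :
    ∑ p, (X : R[X]) ^ ascents (insertMax σ p)
      = (1 + C (n : R) * X) * X ^ ascents σ + X * (1 - X) * derivative (X ^ ascents σ) := by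
  have hpow : ∀ q, (X : R[X]) ^ ascents (insertMax σ q.succ)
      = if IsAscentAt σ q then X ^ ascents σ else X ^ (ascents σ + 1) := by
    intro q
    rw [ascents_insertMax_succ]
    split_ifs <;> rfl
  have hcard := card_filter_add_card_filter_not (s := (univ : Finset (Fin n))) (IsAscentAt σ)
  rw [← ascents_eq_card_filter, card_univ, Fintype.card_fin] at hcard
  have hcard' : (n : R[X]) = ascents σ + #{q | ¬IsAscentAt σ q} :=
    (congrArg Nat.cast hcard.symm).trans (Nat.cast_add _ _)
  rw [Fin.sum_univ_succ, ascents_insertMax_zero, Fintype.sum_congr _ _ hpow, sum_ite, sum_const,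
    sum_const, ← ascents_eq_card_filter, mul_right_comm X, X_mul_derivative_X_pow]
  simp only [nsmul_eq_mul, C_eq_natCast]
  linear_combination (-X ^ (ascents σ + 1)) * hcard'

theorem eulerianPoly_succ (n : ℕ) :
    eulerianPoly R (n + 1)
      = (1 + C (n : R) * X) * eulerianPoly R n + X * (1 - X) * derivative (eulerianPoly R n) := by
  simp only [eulerianPoly, sum_perm_succ_eq_sum_insertMax (fun τ => (X : R[X]) ^ ascents τ),
    sum_comm (γ := Fin (n + 1)), sum_X_pow_ascents_insertMax, derivative_sum, mul_sum,
    sum_add_distrib]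

lemma eulerianPoly_zero : eulerianPoly R 0 = 1 := by
  simp [eulerianPoly, ascents]

end Eulerian

section SuccPowSeries

open PowerSeries

variable (R : Type*) [CommRing R]

noncomputable def succPowSeries (m : ℕ) : R⟦X⟧ :=
  mk fun j => ((j : R) + 1) ^ m

variable {R}

@[simp] lemma coeff_succPowSeries (m j : ℕ) :
    coeff j (succPowSeries R m) = ((j : R) + 1) ^ m :=
  coeff_mk _ _

lemma succPowSeries_zero_mul_one_sub_X : succPowSeries R 0 * (1 - X) = 1 := by
  simpa [succPowSeries, Pi.one_def] using mk_one_mul_one_sub_eq_one R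

lemma succPowSeries_succ (m : ℕ) :
    succPowSeries R (m + 1) = succPowSeries R m + X * d⁄dX R (succPowSeries R m) := by
  ext (_ | j)
  · simp only [map_add, coeff_zero_X_mul, add_zero, coeff_succPowSeries, Nat.cast_zero, zero_add,
      one_pow]
  · simp only [map_add, coeff_succ_X_mul, coeff_derivative, coeff_succPowSeries]
    push_cast
    ring

theorem coe_eulerianPoly (m : ℕ) :
    (eulerianPoly R m : R⟦X⟧) = (1 - X) ^ (m + 1) * succPowSeries R m := by
  induction m with
  | zero =>
    rw [eulerianPoly_zero, Polynomial.coe_one, zero_add, pow_one, mul_comm,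
      succPowSeries_zero_mul_one_sub_X]
  | succ m ih =>
    rw [eulerianPoly_succ]
    simp only [Polynomial.coe_add, Polynomial.coe_mul, Polynomial.coe_one, Polynomial.coe_X,
      Polynomial.coe_C, Polynomial.coe_sub, ← derivative_coe, ih, succPowSeries_succ,
      Derivation.leibniz, Derivation.leibniz_pow, map_sub, derivative_X,
      Derivation.map_one_eq_zero, smul_eq_mul, nsmul_eq_mul, Nat.add_sub_cancel]
    rw [map_natCast]
    push_cast
    ring

lemma succPowSeries_eq_one_add_X_mul_sum_choose (m : ℕ) :
    succPowSeries R m = 1 + X * ∑ k ∈ range (m + 1), m.choose k • succPowSeries R k := by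
  ext (_ | j)
  · simp
  · simp only [map_add, coeff_succ_X_mul, coeff_one, map_sum, map_nsmul, coeff_succPowSeries,
      Nat.cast_succ, add_pow (_ + 1 : R), one_pow, mul_one]
    simp [nsmul_eq_mul, mul_comm]

end SuccPowSeries

section ExponentialGeneratingFunction

open PowerSeries Nat

lemma rescale_C {S : Type*} [CommSemiring S] (a b : S) : rescale a (C b) = C b := by
  ext (_ | n) <;> simp [coeff_C]

variable {A : Type*} [CommRing A] [Algebra ℚ A]

noncomputable def egf (f : ℕ → A) : A⟦X⟧ :=
  mk fun n => algebraMap ℚ A (1 / n !) * f n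

lemma exp_eq_egf_one : exp A = egf 1 := by
  ext n
  simp [egf]

theorem egf_mul_egf (f g : ℕ → A) :
    egf f * egf g = egf fun n => ∑ k ∈ range (n + 1), n.choose k • (f k * g (n - k)) := by
  ext n
  simp only [egf, coeff_mul, coeff_mk, Finset.Nat.sum_antidiagonal_eq_sum_range_succ_mk, mul_sum]
  refine sum_congr rfl fun k hk => ?_
  have hfac : (1 / k ! : ℚ) * (1 / (n - k)!) = 1 / n ! * n.choose k := by
    rw [Nat.cast_choose ℚ (mem_range_succ_iff.mp hk)]
    field_simp
  have := congrArg (algebraMap ℚ A) hfac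
  rw [map_mul, map_mul, map_natCast] at this
  rw [nsmul_eq_mul]
  linear_combination (f k * g (n - k)) * this

variable (R : Type*) [CommRing R] [Algebra ℚ R]

/-- `∑_j X^j e^{(j+1)Y} = e^Y / (1 - X e^Y)`, with `X` the inner and `Y` the outer variable. -/
theorem egf_succPowSeries_mul_one_sub :
    egf (succPowSeries R) * (1 - C X * exp R⟦X⟧) = exp R⟦X⟧ := by
  rw [mul_sub, mul_one, mul_left_comm, exp_eq_egf_one, egf_mul_egf]
  ext n : 1
  simp only [egf, map_sub, coeff_C_mul, coeff_mk, Pi.one_apply, mul_one]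
  rw [succPowSeries_eq_one_add_X_mul_sum_choose n]
  ring

theorem egf_eulerianPoly_eq_rescale :
    egf (fun n => (eulerianPoly R n : R⟦X⟧))
      = C (1 - X) * rescale (1 - X) (egf (succPowSeries R)) := by
  ext n : 1
  simp only [egf, coeff_C_mul, coeff_rescale, coeff_mk, coe_eulerianPoly]
  ring

theorem egf_eulerianPoly_mul_one_sub :
    egf (fun n => (eulerianPoly R n : R⟦X⟧)) * (1 - C X * rescale (1 - X) (exp R⟦X⟧))
      = C (1 - X) * rescale (1 - X) (exp R⟦X⟧) := by
  calc _ = C (1 - X) * rescale (1 - X) (egf (succPowSeries R) * (1 - C X * exp R⟦X⟧)) := by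
        simp only [egf_eulerianPoly_eq_rescale, map_mul, map_sub, map_one, rescale_C]
        ring
    _ = _ := by rw [egf_succPowSeries_mul_one_sub]

end ExponentialGeneratingFunction

section ClosedForm

open PowerSeries

lemma Lpoly_add_two (b : ℕ) :
    Lpoly (b + 2)
      = Polynomial.C (1 / (b + 1).factorial : ℚ) * Polynomial.X * eulerianPoly ℚ (b + 1) := by
  have hmaps : ∀ σ ∈ (univ : Finset (Equiv.Perm (Fin (b + 1)))), ascents σ + 1 ∈ Icc 1 (b + 1) :=
    fun σ _ => mem_Icc.mpr ⟨Nat.le_add_left _ _, by have := ascents_le σ; omega⟩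
  rw [eulerianPoly, mul_sum]
  simp_rw [mul_assoc, ← pow_succ']
  rw [← sum_fiberwise_of_maps_to' hmaps
    fun ν => Polynomial.C (1 / (b + 1).factorial : ℚ) * Polynomial.X ^ ν]
  refine sum_congr rfl fun ν hν => ?_
  have hlam : lam (b + 2) ν
      = (univ.filter fun σ : Equiv.Perm (Fin (b + 1)) => ascents σ + 1 = ν).card
        / (b + 1).factorial := by
    change ((univ.filter fun σ : Equiv.Perm (Fin (b + 1)) => ascents σ = ν - 1).card : ℚ)
      / (b + 1).factorial = _
    congr 3
    refine filter_congr fun σ _ => ?_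
    have := (mem_Icc.mp hν).1
    omega
  rw [sum_const, hlam, nsmul_eq_mul, ← Polynomial.C_eq_natCast, ← mul_assoc, ← map_mul]
  congr 2
  simp [div_eq_mul_inv, mul_comm]

lemma Lser2_eq_add_Xv_mul_egf :
    Lser2 = C (C (1 / 2) * (1 - X)) + Xv * egf (fun n => (eulerianPoly ℚ n : ℚ⟦X⟧)) := by
  ext (_ | b) : 1
  · have half : C (2⁻¹ : ℚ) * 2 = 1 := by rw [← map_ofNat C 2, ← map_mul]; norm_num
    simp [Lser2, Xv, egf, Lpoly, eulerianPoly_zero]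
    linear_combination X * half
  · simp [Lser2, Xv, egf, Lpoly_add_two]
    ring

lemma expOneSubXY_eq_rescale : expOneSubXY = rescale (1 - X) (exp ℚ⟦X⟧) := by
  ext n : 1
  simp [expOneSubXY]

end ClosedForm

/-- The closed form `L(X,Y) = ((1−X)/2)·(1 + X·e^{(1−X)Y})/(1 − X·e^{(1−X)Y})`, stated
as the equivalent identity of formal power series obtained by multiplying both sides by
`1 − X·e^{(1−X)Y}` (whose constant term `1 − X` is a non-zero-divisor). -/
theorem Lser2_closed_form :
    Lser2 * (1 - Xv * expOneSubXY) =
      PowerSeries.C (R := PowerSeries ℚ) (PowerSeries.C (R := ℚ) (1 / 2)) * (1 - Xv) *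
        (1 + Xv * expOneSubXY) := by
  have hE := egf_eulerianPoly_mul_one_sub ℚ
  rw [← expOneSubXY_eq_rescale] at hE
  have half : PowerSeries.C (PowerSeries.C (1 / 2 : ℚ)) * 2
      = (1 : PowerSeries (PowerSeries ℚ)) := by
    rw [← map_ofNat PowerSeries.C 2, ← map_ofNat PowerSeries.C 2, ← map_mul, ← map_mul]
    norm_num
  rw [Lser2_eq_add_Xv_mul_egf, Xv]
  simp only [map_mul, map_sub, map_one] at hE ⊢
  linear_combination PowerSeries.C PowerSeries.X * hE
    - (PowerSeries.C PowerSeries.X * (1 - PowerSeries.C PowerSeries.X) * expOneSubXY) * half
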